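/- Let G be a connected graph of order n ≥ 2, H a connected non-bipartite graph of order n′, and v ∈ V(H). Then dim_l(G∘_v H) = n(n′−2) if and only if H is the complete graph K_{n′}. -/

import Mathlib

open SimpleGraph

/-- A set `S` is a local metric generator for `G` if every pair of adjacent
vertices is distinguished, by distance, by some element of `S`. -/
def IsLocalMetricGenerator {V : Type*} (G : SimpleGraph V) (S : Set V) : Prop :=
  ∀ ⦃u v : V⦄, G.Adj u v → ∃ w ∈ S, G.dist u w ≠ G.dist v w

/-- The local metric dimension of a graph. -/
noncomputable def localMetricDim {V : Type*} [Fintype V] (G : SimpleGraph V) : ℕ :=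
  sInf {k | ∃ S : Finset V, IsLocalMetricGenerator G ↑S ∧ S.card = k}

/-- A local metric basis: a local metric generator of minimum cardinality. -/
def IsLocalMetricBasis {V : Type*} [Fintype V] (G : SimpleGraph V) (S : Finset V) : Prop :=
  IsLocalMetricGenerator G ↑S ∧ S.card = localMetricDim G

/-- The rooted product G ∘_v H: a copy of H is attached at its root v to each
vertex of G. Vertex (g, v) plays the role of the g-th vertex of G. -/
def rootedProd {V W : Type*} (G : SimpleGraph V) (H : SimpleGraph W) (v : W) :
    SimpleGraph (V × W) :=
  SimpleGraph.fromRel (fun a b =>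
    (a.1 = b.1 ∧ H.Adj a.2 b.2) ∨ (a.2 = v ∧ b.2 = v ∧ G.Adj a.1 b.1))

/-!
In `G ∘_v H` distances inside a copy of `H` are those of `H`, and every path leaving the copy at
`g` passes through its root `(g, v)`, so `d((g,x),(g',y)) = d_H(x,v) + d_G(g,g') + d_H(v,y)` for
`g ≠ g'`. Hence if `T ⊆ V(H)` is nonempty and any two adjacent vertices outside `T` lie at
different distances from `v`, the copies of `T` form a local metric generator: an edge inside a
copy is resolved by a vertex of `T` in another copy, a root edge by a vertex of `T` in one of the
two copies.

If `H ≠ K_{n'}` there are `p, q ≠ v` such that `T = V(H) ∖ {v, p, q}` qualifies, and `T ≠ ∅`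
because a non-bipartite graph on three vertices is a triangle; so `dim_l ≤ n(n' - 3)`.
If `H = K_{n'}`, `T = V(H) ∖ {v, u}` gives `dim_l ≤ n(n' - 2)`; conversely the non-root vertices
of a copy of `K_{n'}` are pairwise twins, so every local metric generator misses at most one of
them in each copy.
-/

namespace SimpleGraph

variable {V V' : Type*} {G : SimpleGraph V} {G' : SimpleGraph V'} {u w c : V}

lemma Reachable.dist_map_le (f : G →g G') (h : G.Reachable u w) :
    G'.dist (f u) (f w) ≤ G.dist u w := by
  obtain ⟨p, hp⟩ := h.exists_walk_length_eq_dist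
  exact hp ▸ p.length_map f ▸ dist_le (p.map f)

lemma Walk.exists_length_le_of_adj_imp_adj_or_eq {f : V → V'}
    (hf : ∀ a b, G.Adj a b → G'.Adj (f a) (f b) ∨ f a = f b) (p : G.Walk u w) :
    ∃ q : G'.Walk (f u) (f w), q.length ≤ p.length := by
  induction p with
  | nil => exact ⟨.nil, le_rfl⟩
  | @cons a b _ hab _ ih =>
    obtain ⟨q, hq⟩ := ih
    rcases hf a b hab with hadj | heq
    · exact ⟨.cons hadj q, by simpa using hq⟩
    · exact ⟨q.copy heq.symm rfl, by simp only [Walk.length_copy, Walk.length_cons]; omega⟩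

lemma Reachable.dist_le_of_adj_imp_adj_or_eq {f : V → V'}
    (hf : ∀ a b, G.Adj a b → G'.Adj (f a) (f b) ∨ f a = f b) (h : G.Reachable u w) :
    G'.dist (f u) (f w) ≤ G.dist u w := by
  obtain ⟨p, hp⟩ := h.exists_walk_length_eq_dist
  obtain ⟨q, hq⟩ := p.exists_length_le_of_adj_imp_adj_or_eq hf
  exact (dist_le q).trans (hp ▸ hq)

lemma Reachable.dist_eq_add_of_forall_mem_support [DecidableEq V] (h : G.Reachable u w)
    (hc : ∀ p : G.Walk u w, c ∈ p.support) : G.dist u w = G.dist u c + G.dist c w := by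
  obtain ⟨p, hp⟩ := h.exists_walk_length_eq_dist
  have hsplit := congr_arg Walk.length (p.take_spec (hc p))
  rw [Walk.length_append] at hsplit
  obtain ⟨p₁, hp₁⟩ := (p.takeUntil c (hc p)).reachable.exists_walk_length_eq_dist
  obtain ⟨p₂, hp₂⟩ := (p.dropUntil c (hc p)).reachable.exists_walk_length_eq_dist
  refine le_antisymm ?_ ?_
  · simpa [hp₁, hp₂] using dist_le (p₁.append p₂)
  · calc G.dist u c + G.dist c w
        ≤ (p.takeUntil c (hc p)).length + (p.dropUntil c (hc p)).length :=
          add_le_add (dist_le _) (dist_le _)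
      _ = G.dist u w := hsplit.trans hp

end SimpleGraph

section

variable {V : Type*} {G : SimpleGraph V}

lemma isLocalMetricGenerator_of_forall_adj_notMem {S : Set V}
    (h : ∀ ⦃x y⦄, G.Adj x y → x ∉ S → y ∉ S → ∃ w ∈ S, G.dist x w ≠ G.dist y w) :
    IsLocalMetricGenerator G S := by
  intro x y hxy
  by_cases hx : x ∈ S
  · exact ⟨x, hx, by simp [dist_eq_one_iff_adj.2 hxy.symm]⟩
  by_cases hy : y ∈ S
  · exact ⟨y, hy, by simp [dist_eq_one_iff_adj.2 hxy]⟩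
  exact h hxy hx hy

lemma IsLocalMetricGenerator.mem_or_mem_of_dist_eq {S : Set V} (hS : IsLocalMetricGenerator G S)
    {x y : V} (hxy : G.Adj x y) (htwin : ∀ w, w ≠ x → w ≠ y → G.dist x w = G.dist y w) :
    x ∈ S ∨ y ∈ S := by
  by_contra! hxyS
  obtain ⟨w, hwS, hw⟩ := hS hxy
  exact hw (htwin w (by rintro rfl; exact hxyS.1 hwS) (by rintro rfl; exact hxyS.2 hwS))

variable [Fintype V]

lemma IsLocalMetricGenerator.localMetricDim_le {S : Finset V}
    (hS : IsLocalMetricGenerator G S) : localMetricDim G ≤ S.card :=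
  Nat.sInf_le ⟨S, hS, rfl⟩

lemma le_localMetricDim {k : ℕ} (h : ∀ S : Finset V, IsLocalMetricGenerator G S → k ≤ S.card) :
    k ≤ localMetricDim G := by
  have huniv : IsLocalMetricGenerator G (Finset.univ : Finset V) :=
    isLocalMetricGenerator_of_forall_adj_notMem (by simp)
  exact le_csInf ⟨_, Finset.univ, huniv, rfl⟩ fun k ⟨S, hS, hk⟩ => hk ▸ h S hS

end

section

variable {V W : Type*} {G : SimpleGraph V} {H : SimpleGraph W} {v : W}

lemma rootedProd_adj {a b : V × W} :
    (rootedProd G H v).Adj a b ↔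
      (a.1 = b.1 ∧ H.Adj a.2 b.2) ∨ (a.2 = v ∧ b.2 = v ∧ G.Adj a.1 b.1) := by
  rw [rootedProd, fromRel_adj]
  constructor
  · rintro ⟨-, h | ⟨e, hadj⟩ | ⟨ha, hb, hadj⟩⟩
    · exact h
    · exact Or.inl ⟨e.symm, hadj.symm⟩
    · exact Or.inr ⟨hb, ha, hadj.symm⟩
  · rintro (⟨e, hadj⟩ | ⟨ha, hb, hadj⟩)
    · exact ⟨fun h => hadj.ne (congr_arg Prod.snd h), Or.inl (Or.inl ⟨e, hadj⟩)⟩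
    · exact ⟨fun h => hadj.ne (congr_arg Prod.fst h), Or.inl (Or.inr ⟨ha, hb, hadj⟩)⟩

variable (G H v) in
def rootedProdCopyHom (g : V) : H →g rootedProd G H v where
  toFun x := (g, x)
  map_rel' hxy := rootedProd_adj.2 (Or.inl ⟨rfl, hxy⟩)

variable (G H v) in
def rootedProdRootHom : G →g rootedProd G H v where
  toFun g := (g, v)
  map_rel' hgg := rootedProd_adj.2 (Or.inr ⟨rfl, rfl, hgg⟩)

lemma rootedProd_connected (hG : G.Connected) (hH : H.Connected) :
    (rootedProd G H v).Connected := by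
  have : Nonempty (V × W) := ⟨(hG.nonempty.some, hH.nonempty.some)⟩
  refine ⟨fun ⟨g, x⟩ ⟨g', y⟩ => ?_⟩
  exact (((hH.preconnected x v).map (rootedProdCopyHom G H v g)).trans
    ((hG.preconnected g g').map (rootedProdRootHom G H v))).trans
    ((hH.preconnected v y).map (rootedProdCopyHom G H v g'))

lemma rootedProd_dist_copy (hH : H.Connected) (g : V) (x y : W) :
    (rootedProd G H v).dist (g, x) (g, y) = H.dist x y := by
  have hxy := hH.preconnected x y
  refine le_antisymm (hxy.dist_map_le (rootedProdCopyHom G H v g)) ?_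
  refine (hxy.map (rootedProdCopyHom G H v g)).dist_le_of_adj_imp_adj_or_eq (f := Prod.snd) ?_
  intro a b hab
  rcases rootedProd_adj.1 hab with ⟨-, h⟩ | ⟨ha, hb, -⟩
  · exact Or.inl h
  · exact Or.inr (ha.trans hb.symm)

lemma rootedProd_dist_root (hG : G.Connected) (g g' : V) :
    (rootedProd G H v).dist (g, v) (g', v) = G.dist g g' := by
  have hgg := hG.preconnected g g'
  refine le_antisymm (hgg.dist_map_le (rootedProdRootHom G H v)) ?_
  refine (hgg.map (rootedProdRootHom G H v)).dist_le_of_adj_imp_adj_or_eq (f := Prod.fst) ?_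
  intro a b hab
  rcases rootedProd_adj.1 hab with ⟨h, -⟩ | ⟨-, -, h⟩
  · exact Or.inr h
  · exact Or.inl h

lemma rootedProd_root_mem_support {a b : V × W} (p : (rootedProd G H v).Walk a b)
    (hab : a.1 ≠ b.1) : (a.1, v) ∈ p.support := by
  induction p with
  | nil => exact absurd rfl hab
  | @cons a c b hac p ih =>
    rw [Walk.support_cons]
    rcases rootedProd_adj.1 hac with ⟨e, -⟩ | ⟨ha, -, -⟩
    · exact List.mem_cons_of_mem _ (e ▸ ih (e ▸ hab))
    · exact List.mem_cons.2 (Or.inl (Prod.ext rfl ha.symm))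

lemma rootedProd_dist_of_ne (hG : G.Connected) (hH : H.Connected) {g g' : V} (hgg : g ≠ g')
    (x y : W) :
    (rootedProd G H v).dist (g, x) (g', y) = H.dist x v + G.dist g g' + H.dist v y := by
  classical
  have hR := rootedProd_connected (v := v) hG hH
  have hleft : (rootedProd G H v).dist (g, x) (g', y) =
      (rootedProd G H v).dist (g, x) (g, v) + (rootedProd G H v).dist (g, v) (g', y) :=
    (hR.preconnected _ _).dist_eq_add_of_forall_mem_support
      fun p => rootedProd_root_mem_support p hgg
  have hright : (rootedProd G H v).dist (g, v) (g', y) =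
      (rootedProd G H v).dist (g, v) (g', v) + (rootedProd G H v).dist (g', v) (g', y) :=
    (hR.preconnected _ _).dist_eq_add_of_forall_mem_support fun p => by
      simpa using rootedProd_root_mem_support p.reverse hgg.symm
  rw [hleft, hright, rootedProd_dist_copy hH, rootedProd_dist_root hG,
    rootedProd_dist_copy hH, add_assoc]

end

section

variable {V W : Type*} {G : SimpleGraph V} {H : SimpleGraph W} {v : W}

lemma isLocalMetricGenerator_rootedProd [Fintype V] (hG : G.Connected) (hH : H.Connected)
    (hn : 2 ≤ Fintype.card V) {T : Finset W} (hT : T.Nonempty)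
    (hsep : ∀ ⦃x y⦄, H.Adj x y → x ∉ T → y ∉ T → H.dist x v ≠ H.dist y v) :
    IsLocalMetricGenerator (rootedProd G H v) (Finset.univ ×ˢ T : Finset (V × W)) := by
  obtain ⟨z, hz⟩ := hT
  refine isLocalMetricGenerator_of_forall_adj_notMem fun ⟨g, x⟩ ⟨g', y⟩ hadj hxT hyT => ?_
  simp only [Finset.coe_product, Finset.coe_univ, Set.mem_prod, Set.mem_univ, true_and,
    Finset.mem_coe] at hxT hyT ⊢
  rcases rootedProd_adj.1 hadj with ⟨hgg, hxy⟩ | ⟨hx, hy, hgg⟩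
  · -- a vertex `z ∈ T` in another copy sees `x` and `y` through the root of their copy
    dsimp only at hgg hxy
    subst hgg
    obtain ⟨g'', hg''⟩ := Fintype.exists_ne_of_one_lt_card hn g
    refine ⟨(g'', z), hz, ?_⟩
    rw [rootedProd_dist_of_ne hG hH hg''.symm, rootedProd_dist_of_ne hG hH hg''.symm]
    have : H.dist x v ≠ H.dist y v := hsep hxy hxT hyT
    omega
  · dsimp only at hx hy hgg
    subst hx hy
    refine ⟨(g, z), hz, ?_⟩
    rw [rootedProd_dist_copy hH, rootedProd_dist_of_ne hG hH hgg.ne.symm,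
      dist_eq_one_iff_adj.2 hgg.symm, SimpleGraph.dist_self]
    omega

lemma localMetricDim_rootedProd_le [Fintype V] [Fintype W] [DecidableEq W] {p q : W}
    (hG : G.Connected) (hH : H.Connected) (hn : 2 ≤ Fintype.card V) (hp : p ≠ v) (hq : q ≠ v)
    (hsep : ¬ H.Adj p q ∨ H.dist p v ≠ H.dist q v)
    (hcard : ({v, p, q} : Finset W).card < Fintype.card W) :
    localMetricDim (rootedProd G H v) ≤
      Fintype.card V * (Fintype.card W - ({v, p, q} : Finset W).card) := by
  have hT : ({v, p, q}ᶜ : Finset W).Nonempty := by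
    rw [← Finset.card_pos, Finset.card_compl]
    omega
  have hout : ∀ ⦃x y⦄, H.Adj x y → x ∉ ({v, p, q}ᶜ : Finset W) → y ∉ ({v, p, q}ᶜ : Finset W) →
      H.dist x v ≠ H.dist y v := by
    have hpv := hH.pos_dist_of_ne hp
    have hqv := hH.pos_dist_of_ne hq
    have hvv : H.dist v v = 0 := dist_self
    intro x y hxy hx hy
    simp only [Finset.mem_compl, Finset.mem_insert, Finset.mem_singleton, not_not] at hx hy
    rcases hsep with hsep | hsep <;> rcases hx with hx | hx | hx <;> rcases hy with hy | hy | hy <;>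
      rw [hx, hy] at hxy ⊢ <;>
      first | exact absurd rfl hxy.ne | exact absurd hxy hsep | exact absurd hxy.symm hsep | omega
  refine (isLocalMetricGenerator_rootedProd hG hH hn hT hout).localMetricDim_le.trans_eq ?_
  rw [Finset.card_product, Finset.card_univ, Finset.card_compl]

lemma rootedProd_dist_eq_of_twins (hG : G.Connected) (hH : H.Connected) {x y : W}
    (hx : x ≠ v) (hy : y ≠ v) (htwin : ∀ z, z ≠ x → z ≠ y → H.dist x z = H.dist y z)
    (g : V) (a : V × W) (hax : a ≠ (g, x)) (hay : a ≠ (g, y)) :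
    (rootedProd G H v).dist (g, x) a = (rootedProd G H v).dist (g, y) a := by
  obtain ⟨g', z⟩ := a
  by_cases hgg : g = g'
  · subst hgg
    rw [rootedProd_dist_copy hH, rootedProd_dist_copy hH]
    exact htwin z (by rintro rfl; exact hax rfl) (by rintro rfl; exact hay rfl)
  · rw [rootedProd_dist_of_ne hG hH hgg, rootedProd_dist_of_ne hG hH hgg,
      htwin v hx.symm hy.symm]

lemma card_le_of_isLocalMetricGenerator_rootedProd_top [Fintype V] [Fintype W] [Nonempty W]
    (hG : G.Connected) {S : Finset (V × W)}
    (hS : IsLocalMetricGenerator (rootedProd G ⊤ v) S) :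
    Fintype.card V * (Fintype.card W - 2) ≤ S.card := by
  classical
  set M : Finset (V × W) := Finset.univ ×ˢ Finset.univ.erase v
  have hM : M.card = Fintype.card V * (Fintype.card W - 1) := by
    simp [M, Finset.card_product, Finset.card_erase_of_mem]
  have hmissed : (M \ S).card ≤ Fintype.card V := by
    refine Finset.card_le_card_of_injOn Prod.fst (fun _ _ => Finset.mem_univ _) ?_
    rintro ⟨g, x⟩ hx ⟨g', y⟩ hy (rfl : g = g')
    simp only [M, Finset.coe_sdiff, Set.mem_sdiff, Finset.mem_coe, Finset.mem_product,
      Finset.mem_univ, Finset.mem_erase, true_and, and_true] at hx hy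
    by_contra hxy
    have hne : x ≠ y := fun h => hxy (h ▸ rfl)
    have htwin : ∀ z, z ≠ x → z ≠ y →
        (⊤ : SimpleGraph W).dist x z = (⊤ : SimpleGraph W).dist y z :=
      fun z hzx hzy => by rw [dist_top_of_ne hzx.symm, dist_top_of_ne hzy.symm]
    rcases hS.mem_or_mem_of_dist_eq (x := (g, x)) (y := (g, y))
      (rootedProd_adj.2 (Or.inl ⟨rfl, hne⟩))
      (rootedProd_dist_eq_of_twins hG connected_top hx.1 hy.1 htwin g) with h | h
    · exact hx.2 h
    · exact hy.2 h
  have := Finset.card_le_card_sdiff_add_card (s := M) (t := S)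
  rw [show Fintype.card W - 2 = Fintype.card W - 1 - 1 by omega, Nat.mul_sub_one]
  omega

end

section

variable {W : Type*} {H : SimpleGraph W}

lemma exists_separated_pair_of_ne_top (hH : H.Connected) (htop : H ≠ ⊤) (v : W) :
    ∃ p q, p ≠ v ∧ q ≠ v ∧ p ≠ q ∧ (¬ H.Adj p q ∨ H.dist p v ≠ H.dist q v) := by
  by_contra! h
  refine htop (eq_top_iff.2 fun a b hab => ?_)
  -- some non-root vertex is a neighbour of `v`, and all non-root vertices are equidistant from `v`
  have hroot : ∀ b, b ≠ v → H.Adj v b := by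
    intro b hb
    obtain ⟨p⟩ := hH.preconnected v b
    cases p with
    | nil => exact absurd rfl hb
    | @cons _ c _ hvc _ =>
      by_cases hcb : c = b
      · exact hcb ▸ hvc
      · have hcv : c ≠ v := hvc.ne.symm
        have hbc := (h b c hb hcv (Ne.symm hcb)).2
        exact (dist_eq_one_iff_adj.1 (hbc.trans (dist_eq_one_iff_adj.2 hvc.symm))).symm
  by_cases ha : a = v
  · exact ha ▸ hroot b (ha ▸ hab.ne.symm)
  by_cases hb : b = v
  · exact hb ▸ (hroot a (hb ▸ hab.ne)).symm
  exact (h a b ha hb hab.ne).1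

variable [Fintype W]

lemma eq_top_of_not_colorable_two (hH : ¬ H.Colorable 2) (hcard : Fintype.card W ≤ 3) :
    H = ⊤ := by
  classical
  refine eq_top_iff.2 fun x y hxy => ?_
  by_contra hnadj
  -- colour `x` and `y` alike and the (at most one) remaining vertex differently
  suffices hC : H.Coloring Bool from hH (by simpa using hC.colorable)
  refine Coloring.mk (fun w => decide (w = x ∨ w = y)) fun {a b} hab hcol => ?_
  simp only [decide_eq_decide] at hcol
  by_cases ha : a = x ∨ a = y
  · rcases ha with rfl | rfl <;> rcases hcol.1 (by simp) with rfl | rfl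
    exacts [hab.ne rfl, hnadj hab, hnadj hab.symm, hab.ne rfl]
  · have hb : ¬ (b = x ∨ b = y) := mt hcol.2 ha
    push Not at ha hb
    have h4 : ({a, b, x, y} : Finset W).card = 4 := by
      rw [Finset.card_insert_of_notMem (by simp [hab.ne, ha.1, ha.2]),
        Finset.card_insert_of_notMem (by simp [hb.1, hb.2]), Finset.card_pair hxy.ne]
    have := h4 ▸ Finset.card_le_univ ({a, b, x, y} : Finset W)
    omega

end

/-- dim_l(G ∘_v H) = n(n' - 2) iff H is the complete graph on n' vertices. -/
theorem localMetricDim_rootedProd_eq_upper_iff {V W : Type*} [Fintype V] [Fintype W]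
    (G : SimpleGraph V) (H : SimpleGraph W) (v : W) (hG : G.Connected) (hH : H.Connected)
    (hnb : ¬ H.Colorable 2) (hn : 2 ≤ Fintype.card V) :
    localMetricDim (rootedProd G H v) = Fintype.card V * (Fintype.card W - 2) ↔
      H = ⊤ := by
  classical
  have hW : 3 ≤ Fintype.card W := by
    by_contra! h
    exact hnb (H.colorable_of_fintype.mono (by omega))
  constructor
  · intro hdim
    by_contra htop
    obtain ⟨p, q, hp, hq, hpq, hsep⟩ := exists_separated_pair_of_ne_top hH htop v
    have h3 : ({v, p, q} : Finset W).card = 3 := by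
      rw [Finset.card_insert_of_notMem (by simp [hp.symm, hq.symm]), Finset.card_pair hpq]
    have hW4 : 3 < Fintype.card W := by
      by_contra! h
      exact htop (eq_top_of_not_colorable_two hnb h)
    have hle := localMetricDim_rootedProd_le hG hH hn hp hq hsep (h3 ▸ hW4)
    rw [hdim, h3] at hle
    have := Nat.le_of_mul_le_mul_left hle (by omega)
    omega
  · rintro rfl
    obtain ⟨u, hu⟩ := Fintype.exists_ne_of_one_lt_card (by omega) v
    have := hH.nonempty
    refine le_antisymm ?_ (le_localMetricDim fun S hS =>
      card_le_of_isLocalMetricGenerator_rootedProd_top hG hS)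
    simpa [Finset.card_pair hu.symm] using localMetricDim_rootedProd_le (H := ⊤) hG hH hn hu hu
      (by simp) (by simp [Finset.card_pair hu.symm]; omega)
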